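/- Let G be the semidirect product of the cyclic group ZMod 15 by the cyclic group ZMod 4, where the generator of ZMod 4 acts on ZMod 15 by multiplication by 2 (this group has GAP Id (60, 7)). Then there is no injective group homomorphism from G into the symmetric group S₅ on five letters. -/

import Mathlib

/-! The element `(1, 0)` of `ZMod 15 ⋊ ZMod 4` has order `15`. The order of a permutation is the
lcm of its cycle lengths, so if two distinct primes `p, q` divide it, then either one cycle has
length divisible by `p * q ≥ p + q` or two cycles have lengths at least `p` and `q`; either way the
permutation moves at least `p + q` points, and `3 + 5 > 5`. -/

/-- The homomorphism `AddAut A →* MulAut (Multiplicative A)`. -/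
def addAutToMulAut {A : Type} [AddGroup A] :
    Multiplicative (AddAut A) →* MulAut (Multiplicative A) where
  toFun f := AddEquiv.toMultiplicative f.toAdd
  map_one' := rfl
  map_mul' _ _ := rfl

/-- The homomorphism `Multiplicative (ZMod n) →* G` sending the generator to an
element `g` with `g ^ n = 1`. -/
def zmodHom {n : ℕ} {G : Type} [Group G] (g : G) (hg : g ^ n = 1) :
    Multiplicative (ZMod n) →* G :=
  AddMonoidHom.toMultiplicativeLeft <|
    ZMod.lift n ⟨zmultiplesHom (Additive G) (Additive.ofMul g), by simp [← ofMul_pow, hg]⟩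

/-- Multiplication by `2` as an automorphism of `ZMod 15`. -/
def mulTwo : AddAut (ZMod 15) where
  toFun x := 2 * x
  invFun x := 8 * x
  left_inv := by decide
  right_inv := by decide
  map_add' := by decide

lemma mulTwo_pow_four : (addAutToMulAut (Multiplicative.ofAdd mulTwo)) ^ 4 = 1 := by
  have h : Multiplicative.ofAdd mulTwo ^ 4 = 1 :=
    Multiplicative.toAdd.injective (AddEquiv.ext (by decide))
  rw [← map_pow, h, map_one]

/-- The action of `ZMod 4` on `ZMod 15` with the generator acting by `x ↦ 2x`. -/
def actC4 : Multiplicative (ZMod 4) →* MulAut (Multiplicative (ZMod 15)) :=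
  zmodHom (addAutToMulAut (Multiplicative.ofAdd mulTwo)) mulTwo_pow_four

theorem Nat.Prime.exists_mem_dvd_of_dvd_multiset_lcm {p : ℕ} (hp : p.Prime) {s : Multiset ℕ}
    (h : p ∣ s.lcm) : ∃ a ∈ s, p ∣ a := by
  induction s using Multiset.induction_on with
  | empty => simp [hp.ne_one] at h
  | cons a s ih =>
    rw [Multiset.lcm_cons] at h
    rcases (Nat.Prime.dvd_lcm hp).mp h with ha | hs
    · exact ⟨a, Multiset.mem_cons_self a s, ha⟩
    · obtain ⟨b, hb, hpb⟩ := ih hs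
      exact ⟨b, Multiset.mem_cons_of_mem hb, hpb⟩

namespace Equiv.Perm

variable {α : Type*} [Fintype α] [DecidableEq α]

theorem exists_mem_cycleType_dvd_of_prime_dvd_orderOf {σ : Perm α} {p : ℕ} (hp : p.Prime)
    (h : p ∣ orderOf σ) : ∃ n ∈ σ.cycleType, p ∣ n :=
  hp.exists_mem_dvd_of_dvd_multiset_lcm (σ.lcm_cycleType ▸ h)

theorem add_le_card_of_prime_dvd_orderOf {σ : Perm α} {p q : ℕ} (hp : p.Prime) (hq : q.Prime)
    (hpq : p ≠ q) (hpσ : p ∣ orderOf σ) (hqσ : q ∣ orderOf σ) : p + q ≤ Fintype.card α := by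
  obtain ⟨a, ha, hpa⟩ := exists_mem_cycleType_dvd_of_prime_dvd_orderOf hp hpσ
  obtain ⟨b, hb, hqb⟩ := exists_mem_cycleType_dvd_of_prime_dvd_orderOf hq hqσ
  have hpos : ∀ n ∈ σ.cycleType, 0 < n := fun n hn ↦
    two_pos.trans_le (two_le_of_mem_cycleType hn)
  by_cases hab : a = b
  · subst hab
    have hpqa : p * q ∣ a := ((Nat.coprime_primes hp hq).mpr hpq).mul_dvd_of_dvd_of_dvd hpa hqb
    calc p + q ≤ p * q := by nlinarith [hp.two_le, hq.two_le]
      _ ≤ a := Nat.le_of_dvd (hpos a ha) hpqa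
      _ ≤ σ.cycleType.sum := Multiset.le_sum_of_mem ha
      _ ≤ Fintype.card α := sum_cycleType_le σ
  · have hb' : b ∈ σ.cycleType.erase a := (Multiset.mem_erase_of_ne (Ne.symm hab)).mpr hb
    calc p + q ≤ a + b :=
          add_le_add (Nat.le_of_dvd (hpos a ha) hpa) (Nat.le_of_dvd (hpos b hb) hqb)
      _ ≤ a + (σ.cycleType.erase a).sum := add_le_add_right (Multiset.le_sum_of_mem hb') a
      _ = σ.cycleType.sum := Multiset.sum_erase ha
      _ ≤ Fintype.card α := sum_cycleType_le σ

end Equiv.Perm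

theorem SemidirectProduct.orderOf_inl {N G : Type*} [Group N] [Group G] {φ : G →* MulAut N}
    (n : N) : orderOf (inl n : N ⋊[φ] G) = orderOf n :=
  orderOf_injective inl inl_injective n

/-- The group `ZMod 15 ⋊ ZMod 4` with the generator of `ZMod 4` acting by
multiplication by `2` (GAP Id `(60, 7)`) does not embed into `S₅`. -/
theorem gapId_60_7_not_embeds_S5 :
    ¬ ∃ f : (Multiplicative (ZMod 15) ⋊[actC4] Multiplicative (ZMod 4)) →*
        Equiv.Perm (Fin 5), Function.Injective f := by
  rintro ⟨f, hf⟩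
  have h15 : orderOf (f (SemidirectProduct.inl (Multiplicative.ofAdd 1))) = 15 := by
    rw [orderOf_injective f hf, SemidirectProduct.orderOf_inl, orderOf_ofAdd_eq_addOrderOf,
      ZMod.addOrderOf_one]
  have hcard := Equiv.Perm.add_le_card_of_prime_dvd_orderOf (p := 3) (q := 5) Nat.prime_three
    Nat.prime_five (by norm_num) (by rw [h15]; norm_num) (by rw [h15]; norm_num)
  simp at hcard
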